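/- Fix ħ > 0 and define Ω : ℂ × ℂ → ℂ by Ω(z,w) = exp(−(|z|² + |w|² − 2·z·conj(w))/(2ħ)). Then Ω satisfies the propagator conditions for ℂ with the measure (1/(πħ))·dA, where dA is Lebesgue measure on ℂ ≅ ℝ²: (1) Ω(z,z) = 1 for all z; (2) |Ω(z,w)| = exp(−|z−w|²/(2ħ)) < 1 whenever z ≠ w; (3) Ω(z,w) = conj(Ω(w,z)); (4) for all z, w the function u ↦ Ω(z,u)Ω(u,w) is integrable and (1/(πħ)) ∫_ℂ Ω(z,u)Ω(u,w) dA(u) = Ω(z,w); (5) sup_z (1/(πħ)) ∫_ℂ |Ω(z,u)| dA(u) = 2 < ∞. -/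

import Mathlib

/-!
`Ω(z, u) Ω(u, w)` is a constant times the complex Gaussian `exp(-|u|²/ħ + (w̄ u + z ū)/ħ)`,
and splitting `u` into real and imaginary parts turns the Gaussian integral into a product of two
real ones: `∫ exp(-b|u|² + a u + c ū) dA(u) = (π/b) exp(ac/b)`, which is `πħ Ω(z, w)` here.
`|Ω(z, u)| = exp(-|z - u|²/(2ħ))` is a real Gaussian centred at `z`, of total mass `2πħ`.
-/

open MeasureTheory

/-- The coherent-state propagator of the flat plane `ℂ` at Planck constant `hbar`:
`Ω(z,w) = exp(−(|z|² + |w|² − 2·z·conj w)/(2·hbar))`. -/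
noncomputable def flatPropagator (hbar : ℝ) (z w : ℂ) : ℂ :=
  Complex.exp (-(((‖z‖ : ℂ) ^ 2 + (‖w‖ : ℂ) ^ 2 - 2 * z * (starRingEnd ℂ) w) /
    (2 * hbar)))

/-- The reference measure `(1/(π·hbar))·dA` on `ℂ`, `dA` being Lebesgue measure. -/
noncomputable def flatMeasure (hbar : ℝ) : Measure ℂ :=
  ENNReal.ofReal (1 / (Real.pi * hbar)) • (volume : Measure ℂ)

open Complex ComplexConjugate Real

section ComplexGaussian

variable {b : ℂ} (hb : 0 < b.re) (a c : ℂ)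

lemma gaussian_exponent_measurableEquivPi_symm (v : Fin 2 → ℝ) :
    -b * (‖measurableEquivPi.symm v‖ : ℂ) ^ 2 + a * measurableEquivPi.symm v +
        c * conj (measurableEquivPi.symm v) =
      -∑ i : Fin 2, b * (v i : ℂ) ^ 2 + ∑ i, ![a + c, I * (a - c)] i * v i := by
  have hnorm : (‖(v 0 : ℂ) + v 1 * I‖ : ℂ) ^ 2 = (v 0 : ℂ) ^ 2 + (v 1 : ℂ) ^ 2 := by
    rw [← ofReal_pow, Complex.sq_norm, normSq_add_mul_I]; push_cast; ring
  simp only [measurableEquivPi_symm_apply, hnorm, Fin.sum_univ_two,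
    Matrix.cons_val_zero, Matrix.cons_val_one, map_add, map_mul, conj_ofReal,
    conj_I]
  ring_nf

include hb

theorem integrable_cexp_gaussian_conj :
    Integrable (fun u : ℂ => cexp (-b * (‖u‖ : ℂ) ^ 2 + a * u + c * conj u)) := by
  rw [← volume_preserving_equiv_pi.symm.integrable_comp_emb
    measurableEquivPi.symm.measurableEmbedding]
  simp only [Function.comp_def, gaussian_exponent_measurableEquivPi_symm]
  exact GaussianFourier.integrable_cexp_neg_sum_mul_add (fun _ => hb) _

theorem integral_cexp_gaussian_conj :
    ∫ u : ℂ, cexp (-b * (‖u‖ : ℂ) ^ 2 + a * u + c * conj u) =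
      π / b * cexp (a * c / b) := by
  have hb₀ : b ≠ 0 := by rintro rfl; simp at hb
  have hπb : (π : ℂ) / b ≠ 0 := div_ne_zero (ofReal_ne_zero.mpr pi_ne_zero) hb₀
  rw [← volume_preserving_equiv_pi.symm.integral_comp measurableEquivPi.symm.measurableEmbedding]
  simp only [gaussian_exponent_measurableEquivPi_symm]
  rw [GaussianFourier.integral_cexp_neg_sum_mul_add (fun _ => hb), Fin.prod_univ_two]
  simp only [Matrix.cons_val_zero, Matrix.cons_val_one]
  calc (π / b) ^ (1 / 2 : ℂ) * cexp ((a + c) ^ 2 / (4 * b)) *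
        ((π / b) ^ (1 / 2 : ℂ) * cexp ((I * (a - c)) ^ 2 / (4 * b)))
      = (π / b) ^ (1 / 2 + 1 / 2 : ℂ) *
          cexp ((a + c) ^ 2 / (4 * b) + (I * (a - c)) ^ 2 / (4 * b)) := by
        rw [cpow_add _ _ hπb, Complex.exp_add]; ring
    _ = π / b * cexp (a * c / b) := by
        congr 2
        · norm_num
        · field_simp; ring_nf; rw [I_sq]; ring

end ComplexGaussian

theorem integrable_rexp_neg_mul_sq_norm_sub {b : ℝ} (hb : 0 < b) (z : ℂ) :
    Integrable (fun u : ℂ => rexp (-b * ‖z - u‖ ^ 2)) := by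
  have hint : ∫ u : ℂ, rexp (-b * ‖u‖ ^ 2) ≠ 0 := by
    rw [GaussianFourier.integral_rexp_neg_mul_sq_norm hb]; positivity
  exact (Integrable.of_integral_ne_zero hint).comp_sub_left z

theorem integral_rexp_neg_mul_sq_norm_sub {b : ℝ} (hb : 0 < b) (z : ℂ) :
    ∫ u : ℂ, rexp (-b * ‖z - u‖ ^ 2) = π / b := by
  rw [integral_sub_left_eq_self (fun u : ℂ => rexp (-b * ‖u‖ ^ 2)),
    GaussianFourier.integral_rexp_neg_mul_sq_norm hb, finrank_real_complex]
  norm_num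

section FlatPropagator

variable {hbar : ℝ}

theorem integral_flatMeasure {E : Type*} [NormedAddCommGroup E] [NormedSpace ℝ E]
    (hbar_nonneg : 0 ≤ hbar) (f : ℂ → E) :
    ∫ u, f u ∂flatMeasure hbar = (π * hbar)⁻¹ • ∫ u, f u := by
  rw [flatMeasure, integral_smul_measure, ENNReal.toReal_ofReal (by positivity), one_div]

variable (hbar)

theorem flatPropagator_self (z : ℂ) : flatPropagator hbar z z = 1 := by
  rw [flatPropagator, mul_assoc, mul_conj, normSq_eq_norm_sq]
  push_cast
  ring_nf
  exact Complex.exp_zero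

theorem norm_flatPropagator (z w : ℂ) :
    ‖flatPropagator hbar z w‖ = rexp (-(‖z - w‖ ^ 2) / (2 * hbar)) := by
  have hexponent : (-(((‖z‖ : ℂ) ^ 2 + (‖w‖ : ℂ) ^ 2 - 2 * z * conj w) / (2 * hbar))).re
      = -(‖z - w‖ ^ 2) / (2 * hbar) := by
    rw [show (2 * (hbar : ℂ)) = ((2 * hbar : ℝ) : ℂ) by push_cast; ring, neg_re, div_ofReal_re,
      Complex.sq_norm, normSq_sub, normSq_eq_norm_sq, normSq_eq_norm_sq]
    simp [← ofReal_pow]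
    ring
  rw [flatPropagator, norm_exp, hexponent]

theorem flatPropagator_eq_conj (z w : ℂ) :
    flatPropagator hbar z w = conj (flatPropagator hbar w z) := by
  rw [flatPropagator, flatPropagator, ← Complex.exp_conj]
  congr 1
  simp only [map_neg, map_div₀, map_sub, map_add, map_mul, map_pow, map_ofNat, conj_ofReal,
    conj_conj]
  ring

variable {hbar}

theorem norm_flatPropagator_lt_one (hpos : 0 < hbar) {z w : ℂ} (hzw : z ≠ w) :
    ‖flatPropagator hbar z w‖ < 1 := by
  have : 0 < ‖z - w‖ := norm_pos_iff.mpr (sub_ne_zero.mpr hzw)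
  rw [norm_flatPropagator, Real.exp_lt_one_iff]
  exact div_neg_of_neg_of_pos (by nlinarith) (by positivity)

theorem flatPropagator_eq_mul (z w : ℂ) :
    flatPropagator hbar z w =
      cexp (-((‖z‖ : ℂ) ^ 2 + (‖w‖ : ℂ) ^ 2) / (2 * hbar)) * cexp (z * conj w / hbar) := by
  rw [flatPropagator, ← Complex.exp_add]
  congr 1
  field_simp
  ring

theorem flatPropagator_mul_flatPropagator (z u w : ℂ) :
    flatPropagator hbar z u * flatPropagator hbar u w =
      cexp (-((‖z‖ : ℂ) ^ 2 + (‖w‖ : ℂ) ^ 2) / (2 * hbar)) *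
        cexp (-(hbar : ℂ)⁻¹ * (‖u‖ : ℂ) ^ 2 + conj w / hbar * u + z / hbar * conj u) := by
  rw [flatPropagator, flatPropagator, ← Complex.exp_add, ← Complex.exp_add]
  congr 1
  field_simp
  ring

theorem integrable_flatPropagator_mul_flatPropagator (hpos : 0 < hbar) (z w : ℂ) :
    Integrable (fun u => flatPropagator hbar z u * flatPropagator hbar u w) := by
  simp only [flatPropagator_mul_flatPropagator]
  exact (integrable_cexp_gaussian_conj (by simpa using hpos) _ _).const_mul _

theorem integral_flatPropagator_mul_flatPropagator (hpos : 0 < hbar) (z w : ℂ) :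
    ∫ u, flatPropagator hbar z u * flatPropagator hbar u w =
      π * hbar * flatPropagator hbar z w := by
  simp only [flatPropagator_mul_flatPropagator]
  rw [integral_const_mul, integral_cexp_gaussian_conj (by simpa using hpos),
    flatPropagator_eq_mul]
  have : (hbar : ℂ) ≠ 0 := ofReal_ne_zero.mpr hpos.ne'
  field_simp

theorem integrable_norm_flatPropagator (hpos : 0 < hbar) (z : ℂ) :
    Integrable (fun u => ‖flatPropagator hbar z u‖) := by
  simp_rw [norm_flatPropagator, neg_div, div_eq_inv_mul, ← neg_mul]
  exact integrable_rexp_neg_mul_sq_norm_sub (by positivity) z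

theorem integral_norm_flatPropagator (hpos : 0 < hbar) (z : ℂ) :
    ∫ u, ‖flatPropagator hbar z u‖ = 2 * π * hbar := by
  simp_rw [norm_flatPropagator, neg_div, div_eq_inv_mul, ← neg_mul]
  rw [integral_rexp_neg_mul_sq_norm_sub (by positivity)]
  field_simp

end FlatPropagator

theorem flatPropagator_is_propagator (hbar : ℝ) (hpos : 0 < hbar) :
    (∀ z : ℂ, flatPropagator hbar z z = 1) ∧
    (∀ z w : ℂ, ‖flatPropagator hbar z w‖ = Real.exp (-(‖z - w‖ ^ 2) / (2 * hbar))) ∧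
    (∀ z w : ℂ, z ≠ w → ‖flatPropagator hbar z w‖ < 1) ∧
    (∀ z w : ℂ, flatPropagator hbar z w = (starRingEnd ℂ) (flatPropagator hbar w z)) ∧
    (∀ z w : ℂ,
      Integrable (fun u => flatPropagator hbar z u * flatPropagator hbar u w)
        (flatMeasure hbar) ∧
      ∫ u, flatPropagator hbar z u * flatPropagator hbar u w ∂(flatMeasure hbar) =
        flatPropagator hbar z w) ∧
    (∀ z : ℂ, Integrable (fun u => ‖flatPropagator hbar z u‖) (flatMeasure hbar) ∧
      ∫ u, ‖flatPropagator hbar z u‖ ∂(flatMeasure hbar) = 2) := by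
  have hπħ : π * hbar ≠ 0 := by positivity
  refine ⟨flatPropagator_self hbar, norm_flatPropagator hbar,
    fun _ _ => norm_flatPropagator_lt_one hpos, flatPropagator_eq_conj hbar,
    fun z w => ⟨(integrable_flatPropagator_mul_flatPropagator hpos z w).smul_measure
      ENNReal.ofReal_ne_top, ?_⟩,
    fun z => ⟨(integrable_norm_flatPropagator hpos z).smul_measure ENNReal.ofReal_ne_top, ?_⟩⟩
  · rw [integral_flatMeasure hpos.le, integral_flatPropagator_mul_flatPropagator hpos,
      real_smul, ← mul_assoc, ofReal_inv, ofReal_mul, inv_mul_cancel₀ (by exact_mod_cast hπħ),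
      one_mul]
  · rw [integral_flatMeasure hpos.le, integral_norm_flatPropagator hpos, smul_eq_mul]
    field_simp
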